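/- Fix an integer d ≥ 1, λ > 0, and an integer k ≥ 1. Let K_1, …, K_k be i.i.d. Exponential random variables with rate 1 and let W_1, …, W_k be i.i.d. random variables, independent of the K_i, each distributed as the uniform mixture (1/d)·∑_{i=1}^d Gamma(i,λ). Then for every u with 0 < u < 1, P( ∑_{i=1}^k W_i < ∑_{i=1}^k K_i ) ≤ [ (λ/(d·u·(1−u)))·(1 − (λ/(λ+u))^d) ]^k. -/

import Mathlib

/-!
Chernoff bound: for `0 < u < 1` the event `∑ Wᵢ < ∑ Kᵢ` lies in `{0 ≤ ∑ Kᵢ - ∑ Wᵢ}`, whose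
probability is at most the moment generating function of `∑ Kᵢ - ∑ Wᵢ` at `u`. By independence
this factors as `(𝔼 e^{u K} · 𝔼 e^{-u W})^k`. Here `𝔼 e^{u K} = 1/(1-u)`, and
`𝔼 e^{-u W} = d⁻¹ ∑_{j=1}^d (λ/(λ+u))^j`, a geometric sum equal to `(λ/(d u))(1 - (λ/(λ+u))^d)`.
-/

open MeasureTheory ProbabilityTheory Real Set
open scoped ENNReal NNReal

section Gamma

variable {a r t : ℝ}

lemma gammaPDF_mul_ofReal_exp_mul (ha : 0 < a) (hr : 0 < r) (ht : t < r) (x : ℝ) :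
    gammaPDF a r x * ENNReal.ofReal (exp (t * x))
      = ENNReal.ofReal ((r / (r - t)) ^ a) * gammaPDF a (r - t) x := by
  have hrt : 0 < r - t := by linarith
  rcases lt_or_ge x 0 with hx | hx
  · rw [gammaPDF_of_neg hx, gammaPDF_of_neg hx, zero_mul, mul_zero]
  rw [gammaPDF_of_nonneg hx, gammaPDF_of_nonneg hx, ← ENNReal.ofReal_mul (by positivity),
    ← ENNReal.ofReal_mul (by positivity)]
  congr 1
  have hexp : exp (-((r - t) * x)) = exp (t * x) * exp (-(r * x)) := by
    rw [← exp_add]; ring_nf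
  have := (rpow_pos_of_pos hrt a).ne'
  have := (Gamma_pos_of_pos ha).ne'
  rw [div_rpow hr.le hrt.le, hexp]
  field_simp

lemma lintegral_exp_mul_gammaMeasure (ha : 0 < a) (hr : 0 < r) (ht : t < r) :
    ∫⁻ x, ENNReal.ofReal (exp (t * x)) ∂gammaMeasure a r = ENNReal.ofReal ((r / (r - t)) ^ a) := by
  have hpdf (s : ℝ) : Measurable (gammaPDF a s) := (measurable_gammaPDFReal a s).ennreal_ofReal
  rw [gammaMeasure, lintegral_withDensity_eq_lintegral_mul _ (hpdf r) (by fun_prop)]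
  calc ∫⁻ x, gammaPDF a r x * ENNReal.ofReal (exp (t * x))
      = ∫⁻ x, ENNReal.ofReal ((r / (r - t)) ^ a) * gammaPDF a (r - t) x :=
        lintegral_congr (gammaPDF_mul_ofReal_exp_mul ha hr ht)
    _ = ENNReal.ofReal ((r / (r - t)) ^ a) := by
        rw [lintegral_const_mul _ (hpdf (r - t)),
          lintegral_gammaPDF_eq_one ha (by linarith), mul_one]

lemma integrable_exp_mul_gammaMeasure (ha : 0 < a) (hr : 0 < r) (ht : t < r) :
    Integrable (fun x ↦ exp (t * x)) (gammaMeasure a r) := by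
  refine ⟨by fun_prop, ?_⟩
  simp only [hasFiniteIntegral_iff_norm, norm_of_nonneg (exp_pos _).le,
    lintegral_exp_mul_gammaMeasure ha hr ht, ENNReal.ofReal_lt_top]

lemma mgf_id_gammaMeasure (ha : 0 < a) (hr : 0 < r) (ht : t < r) :
    mgf id (gammaMeasure a r) t = (r / (r - t)) ^ a := by
  rw [mgf, integral_eq_lintegral_of_nonneg_ae (ae_of_all _ fun x ↦ (exp_pos _).le)
    (by fun_prop)]
  simp only [id, lintegral_exp_mul_gammaMeasure ha hr ht]
  exact ENNReal.toReal_ofReal (rpow_nonneg (div_nonneg hr.le (by linarith)) a)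

end Gamma

section GammaMixture

noncomputable def gammaMixture (d : ℕ) (l : ℝ) : Measure ℝ :=
  (d : ℝ≥0∞)⁻¹ • ∑ j ∈ Finset.Icc 1 d, gammaMeasure (j : ℝ) l

variable {d : ℕ} {l t : ℝ}

lemma integrable_exp_mul_gammaMeasure_natCast (hl : 0 < l) (ht : t < l) :
    ∀ j ∈ Finset.Icc 1 d, Integrable (fun x ↦ exp (t * x)) (gammaMeasure (j : ℝ) l) :=
  fun _ hj ↦ integrable_exp_mul_gammaMeasure
    (Nat.cast_pos.mpr (Finset.mem_Icc.mp hj).1) hl ht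

lemma integrable_exp_mul_gammaMixture (hd : d ≠ 0) (hl : 0 < l) (ht : t < l) :
    Integrable (fun x ↦ exp (t * x)) (gammaMixture d l) :=
  (integrable_finsetSum_measure.mpr (integrable_exp_mul_gammaMeasure_natCast hl ht)).smul_measure
    (ENNReal.inv_ne_top.mpr (Nat.cast_ne_zero.mpr hd))

lemma mgf_id_gammaMixture (hl : 0 < l) (ht : t < l) :
    mgf id (gammaMixture d l) t = (d : ℝ)⁻¹ * ∑ j ∈ Finset.Icc 1 d, (l / (l - t)) ^ j := by
  simp only [mgf, id, gammaMixture]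
  rw [integral_smul_measure,
    integral_finsetSum_measure (integrable_exp_mul_gammaMeasure_natCast hl ht)]
  simp only [ENNReal.toReal_inv, ENNReal.toReal_natCast, smul_eq_mul]
  congr 1
  refine Finset.sum_congr rfl fun j hj ↦ ?_
  rw [← rpow_natCast, ← mgf_id_gammaMeasure (Nat.cast_pos.mpr (Finset.mem_Icc.mp hj).1) hl ht]
  rfl

end GammaMixture

lemma geom_sum_Icc_one {α : Type*} [Field α] {x : α} (hx : x ≠ 1) (n : ℕ) :
    ∑ i ∈ Finset.Icc 1 n, x ^ i = x * (1 - x ^ n) / (1 - x) := by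
  rw [← Finset.Ico_add_one_right_eq_Icc, geom_sum_Ico' hx (by omega)]
  ring

lemma sum_Icc_div_add_pow {l u : ℝ} (hl : 0 < l) (hu : 0 < u) (n : ℕ) :
    ∑ i ∈ Finset.Icc 1 n, (l / (l + u)) ^ i = l / u * (1 - (l / (l + u)) ^ n) := by
  have hlu : 0 < l + u := by linarith
  rw [geom_sum_Icc_one (by rw [Ne, div_eq_one_iff_eq hlu.ne']; linarith)]
  have h1 : 1 - l / (l + u) = u / (l + u) := by field_simp; ring
  rw [h1]
  field_simp

section Chernoff

variable {Ω ι κ : Type*} {m : MeasurableSpace Ω} {μ : Measure Ω} [IsProbabilityMeasure μ]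
  [Fintype ι] [Fintype κ]

lemma measureReal_sum_lt_sum_le_prod_mgf {K : ι → Ω → ℝ} {W : κ → Ω → ℝ}
    (hK : ∀ i, Measurable (K i)) (hW : ∀ i, Measurable (W i))
    (hindep : iIndepFun (Sum.elim K W) μ) {t : ℝ} (ht : 0 ≤ t)
    (hKint : ∀ i, Integrable (fun ω ↦ exp (t * K i ω)) μ)
    (hWint : ∀ i, Integrable (fun ω ↦ exp (-t * W i ω)) μ) :
    μ.real {ω | ∑ i, W i ω < ∑ i, K i ω} ≤ (∏ i, mgf (K i) μ t) * ∏ i, mgf (W i) μ (-t) := by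
  set Y : ι ⊕ κ → Ω → ℝ := Sum.elim K fun i ↦ -W i
  have hY : ∀ j, Measurable (Y j) := by
    rintro (i | i)
    exacts [hK i, (hW i).neg]
  have hYindep : iIndepFun Y μ := by
    convert hindep.comp (fun j ↦ Sum.elim (fun _ ↦ id) (fun _ ↦ Neg.neg) j)
      (by rintro (i | i); exacts [measurable_id, measurable_neg]) using 1
    funext j; cases j <;> rfl
  have hYint : ∀ j ∈ Finset.univ, Integrable (fun ω ↦ exp (t * Y j ω)) μ := by
    rintro (i | i) -
    · exact hKint i
    · simpa only [Y, Sum.elim_inr, Pi.neg_apply, mul_neg, neg_mul] using hWint i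
  have hsub : {ω | ∑ i, W i ω < ∑ i, K i ω} ⊆ {ω | 0 ≤ (∑ j, Y j) ω} := by
    intro ω hω
    simp only [mem_ofPred_eq, Finset.sum_apply, Fintype.sum_sum_type, Y, Sum.elim_inl,
      Sum.elim_inr, Pi.neg_apply, Finset.sum_neg_distrib] at hω ⊢
    linarith
  calc μ.real {ω | ∑ i, W i ω < ∑ i, K i ω}
      ≤ μ.real {ω | 0 ≤ (∑ j, Y j) ω} := measureReal_mono hsub
    _ ≤ exp (-t * 0) * mgf (∑ j, Y j) μ t :=
        measure_ge_le_exp_mul_mgf 0 ht (hYindep.integrable_exp_mul_sum hY hYint)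
    _ = (∏ i, mgf (K i) μ t) * ∏ i, mgf (W i) μ (-t) := by
        rw [mul_zero, exp_zero, one_mul, hYindep.mgf_sum hY, Fintype.prod_sum_type]
        simp only [Y, Sum.elim_inl, Sum.elim_inr, mgf_neg]

end Chernoff

lemma integrable_exp_mul_of_map_eq {Ω : Type*} {m : MeasurableSpace Ω} {μ : Measure Ω}
    {X : Ω → ℝ} {ν : Measure ℝ} {t : ℝ} (hX : AEMeasurable X μ) (hν : μ.map X = ν)
    (h : Integrable (fun x ↦ exp (t * x)) ν) : Integrable (fun ω ↦ exp (t * X ω)) μ := by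
  subst hν
  exact (integrable_map_measure (by fun_prop) hX).mp h

theorem prob_sum_W_lt_sum_K_le_general
    {Ω : Type*} [MeasureSpace Ω] [IsProbabilityMeasure (ℙ : Measure Ω)]
    (d : ℕ) (hd : 1 ≤ d) (l : ℝ) (hl : 0 < l) (k : ℕ)
    (K W : Fin k → Ω → ℝ)
    (hKmeas : ∀ i, Measurable (K i)) (hWmeas : ∀ i, Measurable (W i))
    (hindep : iIndepFun (Sum.elim K W) ℙ)
    (hKlaw : ∀ i, Measure.map (K i) ℙ = expMeasure 1)
    (hWlaw : ∀ i, Measure.map (W i) ℙ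
      = (d : ℝ≥0∞)⁻¹ • (∑ j ∈ Finset.Icc 1 d, gammaMeasure (j : ℝ) l)) :
    ∀ u : ℝ, 0 < u → u < 1 →
      (ℙ {ω | (∑ i, W i ω) < ∑ i, K i ω}).toReal
        ≤ ((l / (d * u * (1 - u))) * (1 - (l / (l + u)) ^ d)) ^ k := by
  intro u hu hu1
  have hWlaw' : ∀ i, Measure.map (W i) ℙ = gammaMixture d l := hWlaw
  have hlu : -u < l := by linarith
  have hKmgf : ∀ i, mgf (K i) ℙ u = 1 / (1 - u) := fun i ↦ by
    rw [← mgf_id_map (hKmeas i).aemeasurable, hKlaw i, expMeasure,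
      mgf_id_gammaMeasure one_pos one_pos hu1, rpow_one]
  have hWmgf : ∀ i, mgf (W i) ℙ (-u) = (d : ℝ)⁻¹ * (l / u * (1 - (l / (l + u)) ^ d)) :=
    fun i ↦ by
      rw [← mgf_id_map (hWmeas i).aemeasurable, hWlaw' i, mgf_id_gammaMixture hl hlu,
        sub_neg_eq_add, sum_Icc_div_add_pow hl hu]
  calc (ℙ {ω | (∑ i, W i ω) < ∑ i, K i ω}).toReal
      ≤ (∏ i, mgf (K i) ℙ u) * ∏ i, mgf (W i) ℙ (-u) :=
        measureReal_sum_lt_sum_le_prod_mgf hKmeas hWmeas hindep hu.le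
          (fun i ↦ integrable_exp_mul_of_map_eq (hKmeas i).aemeasurable (hKlaw i)
            (integrable_exp_mul_gammaMeasure one_pos one_pos hu1))
          (fun i ↦ integrable_exp_mul_of_map_eq (hWmeas i).aemeasurable (hWlaw' i)
            (integrable_exp_mul_gammaMixture (by omega) hl hlu))
    _ = ((l / (d * u * (1 - u))) * (1 - (l / (l + u)) ^ d)) ^ k := by
        have : 1 - u ≠ 0 := by linarith
        simp only [hKmgf, hWmgf, Finset.prod_const, Finset.card_univ, Fintype.card_fin, ← mul_pow]
        field_simp

/-- Let `K_1, …, K_k` be i.i.d. Exponential(1) random variables and let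
`W_1, …, W_k` be i.i.d. random variables, independent of the `K_i`, each distributed as the
uniform mixture `(1/d)·∑_{i=1}^d Gamma(i,λ)`. Then for every `0 < u < 1`,
`P(∑ W_i < ∑ K_i) ≤ [(λ/(d·u·(1−u)))·(1 − (λ/(λ+u))^d)]^k`. -/
theorem prob_sum_W_lt_sum_K_le
    {Ω : Type*} [MeasureSpace Ω] [IsProbabilityMeasure (ℙ : Measure Ω)]
    (d : ℕ) (hd : 1 ≤ d) (l : ℝ) (hl : 0 < l) (k : ℕ) (hk : 1 ≤ k)
    (K W : Fin k → Ω → ℝ)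
    (hKmeas : ∀ i, Measurable (K i)) (hWmeas : ∀ i, Measurable (W i))
    (hindep : iIndepFun (Sum.elim K W) ℙ)
    (hKlaw : ∀ i, Measure.map (K i) ℙ = expMeasure 1)
    (hWlaw : ∀ i, Measure.map (W i) ℙ
      = (d : ℝ≥0∞)⁻¹ • (∑ j ∈ Finset.Icc 1 d, gammaMeasure (j : ℝ) l)) :
    ∀ u : ℝ, 0 < u → u < 1 →
      (ℙ {ω | (∑ i, W i ω) < ∑ i, K i ω}).toReal
        ≤ ((l / (d * u * (1 - u))) * (1 - (l / (l + u)) ^ d)) ^ k :=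
  prob_sum_W_lt_sum_K_le_general d hd l hl k K W hKmeas hWmeas hindep hKlaw hWlaw
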